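/- Let A be a finite dimensional k-algebra and α : A⊗A → A* a Hochschild 2-cocycle. Suppose there exist c ∈ Z(A) ∩ U(A) and h ∈ A* with α(a⊗b)(c) − α(b⊗a)(c) + h(ab−ba) = 0 for all a,b ∈ A. Then, setting h' := h − α(1⊗1)·c, the pair (i_c*(α̃), h') is a cyclic 2-cocycle, i.e., b₃*(i_c*(α̃)) = 0 and B₁*(i_c*(α̃)) + b₁*(h') = 0. -/

import Mathlib

open TensorProduct

namespace HochschildScaffold

variable (k : Type*) [Field k] (A : Type*) [Ring A] [Algebra k A]

/-- `Tp k A n` is the `n`-fold tensor power `A^{⊗n}` over `k`. -/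
abbrev Tp (n : ℕ) : Type _ := ⨂[k] (_ : Fin n), A

/-- `A^{⊗1} ≃ A`. -/
noncomputable def single : Tp k A 1 ≃ₗ[k] A :=
  PiTensorProduct.subsingletonEquiv (0 : Fin 1)

/-- Attach a tensor factor at the front: `A ⊗ A^{⊗n} ≃ A^{⊗(n+1)}`. -/
noncomputable def toFront (n : ℕ) : (A ⊗[k] Tp k A n) ≃ₗ[k] Tp k A (n + 1) :=
  (TensorProduct.congr (single k A).symm (LinearEquiv.refl k (Tp k A n))) ≪≫ₗ
    (PiTensorProduct.tmulEquiv k A) ≪≫ₗ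
      (PiTensorProduct.reindex k (fun _ => A)
        ((finSumFinEquiv : Fin 1 ⊕ Fin n ≃ Fin (1 + n)).trans (finCongr (Nat.add_comm 1 n))))

/-- Attach a tensor factor at the back: `A^{⊗n} ⊗ A ≃ A^{⊗(n+1)}`. -/
noncomputable def toBack (n : ℕ) : (Tp k A n ⊗[k] A) ≃ₗ[k] Tp k A (n + 1) :=
  (TensorProduct.congr (LinearEquiv.refl k (Tp k A n)) (single k A).symm) ≪≫ₗ
    (PiTensorProduct.tmulEquiv k A) ≪≫ₗ
      (PiTensorProduct.reindex k (fun _ => A) (finSumFinEquiv : Fin n ⊕ Fin 1 ≃ Fin (n + 1)))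

/-- Multiply the first two tensor factors: `a₀ ⊗ a₁ ⊗ ⋯ ↦ (a₀a₁) ⊗ ⋯`. -/
noncomputable def mulFront (n : ℕ) : Tp k A (n + 2) →ₗ[k] Tp k A (n + 1) :=
  (toFront k A n).toLinearMap ∘ₗ
    (LinearMap.rTensor (Tp k A n) (LinearMap.mul' k A)) ∘ₗ
      (TensorProduct.assoc k A A (Tp k A n)).symm.toLinearMap ∘ₗ
        (LinearMap.lTensor A (toFront k A n).symm.toLinearMap) ∘ₗ
          (toFront k A (n + 1)).symm.toLinearMap

/-- Cyclic rotation `(a₀,…,a_{n-1}) ↦ (a_{n-1}, a₀, …, a_{n-2})` on `A^{⊗n}`. -/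
noncomputable def rotR (n : ℕ) : Tp k A n ≃ₗ[k] Tp k A n :=
  PiTensorProduct.reindex k (fun _ => A) (finRotate n)

/-- The `j`-th (non-cyclic) face map `A^{⊗(m+1)} → A^{⊗m}`, multiplying the
`j`-th and `(j+1)`-st tensor factors: `a₀⊗⋯⊗aₘ ↦ a₀⊗⋯⊗aⱼaⱼ₊₁⊗⋯⊗aₘ`. -/
noncomputable def nface : (m : ℕ) → Fin m → (Tp k A (m + 1) →ₗ[k] Tp k A m)
  | m + 1, j =>
      (PiTensorProduct.reindex k (fun _ => A) ((finRotate (m + 1)) ^ (j : ℕ))).toLinearMap ∘ₗ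
        (mulFront k A m) ∘ₗ
          (PiTensorProduct.reindex k (fun _ => A) (((finRotate (m + 2)) ^ (j : ℕ))⁻¹)).toLinearMap

/-- The Hochschild boundary `b_{n+1} : A^{⊗(n+2)} → A^{⊗(n+1)}`, i.e.
`b(a₀⊗⋯⊗a_{n+1}) = Σ_{i=0}^{n} (-1)^i a₀⊗⋯⊗aᵢaᵢ₊₁⊗⋯⊗a_{n+1}
  + (-1)^{n+1} a_{n+1}a₀⊗a₁⊗⋯⊗aₙ`. -/
noncomputable def hb (n : ℕ) : Tp k A (n + 2) →ₗ[k] Tp k A (n + 1) :=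
  (∑ i : Fin (n + 1), ((-1 : k) ^ (i : ℕ)) • nface k A (n + 1) i)
    + ((-1 : k) ^ (n + 1)) • (mulFront k A n ∘ₗ (rotR k A (n + 2)).toLinearMap)

/-- Insert a `1` in front: `a₀⊗⋯⊗a_{n-1} ↦ 1⊗a₀⊗⋯⊗a_{n-1}`. -/
noncomputable def ins0 (n : ℕ) : Tp k A n →ₗ[k] Tp k A (n + 1) :=
  (toFront k A n).toLinearMap ∘ₗ (TensorProduct.mk k A (Tp k A n) 1)

/-- Insert a `1` in the second slot: `a₀⊗a₁⊗⋯ ↦ a₀⊗1⊗a₁⊗⋯`. -/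
noncomputable def ins1 (n : ℕ) : Tp k A (n + 1) →ₗ[k] Tp k A (n + 2) :=
  (rotR k A (n + 2)).toLinearMap ∘ₗ (ins0 k A (n + 1)) ∘ₗ (rotR k A (n + 1)).symm.toLinearMap

/-- The Connes boundary operator `B_n : A^{⊗(n+1)} → A^{⊗(n+2)}`, i.e.
`B(a₀⊗⋯⊗aₙ) = Σ_{i=0}^n (-1)^{ni} (1⊗aᵢ⊗⋯⊗aₙ⊗a₀⊗⋯⊗aᵢ₋₁ − aᵢ⊗1⊗aᵢ₊₁⊗⋯⊗aₙ⊗a₀⊗⋯⊗aᵢ₋₁)`. -/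
noncomputable def hB (n : ℕ) : Tp k A (n + 1) →ₗ[k] Tp k A (n + 2) :=
  ∑ i : Fin (n + 1), ((-1 : k) ^ (n * (i : ℕ))) •
    ((ins0 k A (n + 1) - ins1 k A n) ∘ₗ
      (PiTensorProduct.reindex k (fun _ => A) (((finRotate (n + 1)) ^ (i : ℕ))⁻¹)).toLinearMap)

/-- Contraction by a degree-0 cochain `c ∈ A`:
`i_c(a₀⊗a₁⊗⋯⊗aₙ) = a₀c⊗a₁⊗⋯⊗aₙ`. -/
noncomputable def iC (c : A) (n : ℕ) : Tp k A (n + 1) →ₗ[k] Tp k A (n + 1) :=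
  (toFront k A n).toLinearMap ∘ₗ
    (LinearMap.rTensor (Tp k A n) (LinearMap.mulRight k c)) ∘ₗ
      (toFront k A n).symm.toLinearMap

/-- Split in the middle: `A^{⊗(m+n)} ≃ A^{⊗m} ⊗ A^{⊗n}`. -/
noncomputable def splitMid (m n : ℕ) : Tp k A (m + n) ≃ₗ[k] (Tp k A m ⊗[k] Tp k A n) :=
  (PiTensorProduct.reindex k (fun _ => A)
      (finSumFinEquiv : Fin m ⊕ Fin n ≃ Fin (m + n)).symm) ≪≫ₗ
    (PiTensorProduct.tmulEquiv k A).symm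

/-- Contraction by an `m`-cochain `β : A^{⊗m} → A`:
`i_β(a₀⊗a₁⊗⋯⊗aₙ) = (a₀·β(a₁⊗⋯⊗aₘ)) ⊗ a_{m+1} ⊗ ⋯ ⊗ aₙ`. -/
noncomputable def iContr {m : ℕ} (β : Tp k A m →ₗ[k] A) (n : ℕ) :
    Tp k A (m + n + 1) →ₗ[k] Tp k A (n + 1) :=
  (toFront k A n).toLinearMap ∘ₗ
    (LinearMap.rTensor (Tp k A n) (LinearMap.mul' k A)) ∘ₗ
      (TensorProduct.assoc k A A (Tp k A n)).symm.toLinearMap ∘ₗ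
        (LinearMap.lTensor A
          ((LinearMap.rTensor (Tp k A n) β) ∘ₗ (splitMid k A m n).toLinearMap)) ∘ₗ
          (toFront k A (m + n)).symm.toLinearMap

/-- The Hochschild coboundary `δ^m : Hom(A^{⊗m}, A) → Hom(A^{⊗(m+1)}, A)`:
`(δβ)(a₁⊗⋯⊗a_{m+1}) = a₁β(a₂⊗⋯) + Σ_{i=1}^m (-1)^i β(⋯⊗aᵢaᵢ₊₁⊗⋯)
  + (-1)^{m+1} β(a₁⊗⋯⊗aₘ)a_{m+1}`. -/
noncomputable def hdelta (m : ℕ) (β : Tp k A m →ₗ[k] A) : Tp k A (m + 1) →ₗ[k] A :=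
  (TensorProduct.lift ((LinearMap.mul k A).compl₂ β) ∘ₗ (toFront k A m).symm.toLinearMap)
    + ∑ j : Fin m, ((-1 : k) ^ ((j : ℕ) + 1)) • (β ∘ₗ nface k A m j)
    + ((-1 : k) ^ (m + 1)) •
        (TensorProduct.lift ((LinearMap.mul k A) ∘ₗ β) ∘ₗ (toBack k A m).symm.toLinearMap)

/-- Left action of `A` on `A* = Hom_k(A,k)`: `(a·g)(x) = g(xa)`. -/
noncomputable def la : A →ₗ[k] Module.Dual k A →ₗ[k] Module.Dual k A :=
  LinearMap.mk₂ k (fun a g => g ∘ₗ LinearMap.mulRight k a)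
    (by intro a a' g; ext x; simp [mul_add])
    (by intro c a g; ext x; simp)
    (by intro a g g'; ext x; simp)
    (by intro c a g; ext x; simp)

/-- Right action of `A` on `A* = Hom_k(A,k)`: `(f·b)(x) = f(bx)`. -/
noncomputable def ra : Module.Dual k A →ₗ[k] A →ₗ[k] Module.Dual k A :=
  LinearMap.mk₂ k (fun g b => g ∘ₗ LinearMap.mulLeft k b)
    (by intro g g' b; ext x; simp)
    (by intro c g b; ext x; simp)
    (by intro g b b'; ext x; simp [add_mul])
    (by intro c g b; ext x; simp)

/-- The Hochschild coboundary `δ^m : Hom(A^{⊗m}, A^*) → Hom(A^{⊗(m+1)}, A^*)`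
for cochains with values in the dual bimodule `A^*`. -/
noncomputable def hdeltaD (m : ℕ) (β : Tp k A m →ₗ[k] Module.Dual k A) :
    Tp k A (m + 1) →ₗ[k] Module.Dual k A :=
  (TensorProduct.lift ((la k A).compl₂ β) ∘ₗ (toFront k A m).symm.toLinearMap)
    + ∑ j : Fin m, ((-1 : k) ^ ((j : ℕ) + 1)) • (β ∘ₗ nface k A m j)
    + ((-1 : k) ^ (m + 1)) •
        (TensorProduct.lift ((ra k A) ∘ₗ β) ∘ₗ (toBack k A m).symm.toLinearMap)

/-- The canonical adjunction `(A^{⊗(n+1)})^* → Hom_k(A^{⊗n}, A^*)`,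
`φ ↦ ((a₁⊗⋯⊗aₙ) ↦ (a₀ ↦ φ(a₀⊗a₁⊗⋯⊗aₙ)))`. -/
noncomputable def adj (n : ℕ) (φ : Module.Dual k (Tp k A (n + 1))) :
    Tp k A n →ₗ[k] Module.Dual k A :=
  (TensorProduct.curry (φ ∘ₗ (toFront k A n).toLinearMap)).flip

/-- `A^{⊗3} ≃ A ⊗ (A ⊗ A)`. -/
noncomputable def triple : Tp k A 3 ≃ₗ[k] (A ⊗[k] (A ⊗[k] A)) :=
  (toFront k A 2).symm ≪≫ₗ
    TensorProduct.congr (LinearEquiv.refl k A)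
      ((toFront k A 1).symm ≪≫ₗ TensorProduct.congr (LinearEquiv.refl k A) (single k A))

/-- The adjoint `α̃ ∈ (A^{⊗3})^*` of a 2-cochain `α : A ⊗ A → A^*`,
`α̃(a⊗b⊗d) := α(b⊗d)(a)`. -/
noncomputable def adjCochain (α : A →ₗ[k] A →ₗ[k] Module.Dual k A) :
    Module.Dual k (Tp k A 3) :=
  (TensorProduct.lift
      ((TensorProduct.lift.equiv (RingHom.id k) A A k).toLinearMap ∘ₗ (LinearMap.lflip.toLinearMap ∘ₗ α).flip)) ∘ₗ
    (triple k A).toLinearMap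

/-!
On pure tensors, `b₃*(i_c*(α̃))(a⊗b⊗d⊗e)` is the Hochschild cocycle identity of `α` at
`(b, d, e)` evaluated at `ac`, once the central element `c` is moved past `b`.
For the second equation, the cocycle identity with first argument `1` gives
`α(1⊗b)(x) = α(1⊗1)(bx)`, so the two terms of `B₁*(i_c*(α̃))(a⊗b)` with a `1` in the middle
cancel against the correction `α(1⊗1)·c` in `h'`; what is left is the hypothesis on `h`.
-/

open PiTensorProduct

variable {k A}

@[simp]
lemma single_tprod (f : Fin 1 → A) : single k A (PiTensorProduct.tprod k f) = f 0 := by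
  simp [single]

@[simp]
lemma single_symm_apply (a : A) :
    (single k A).symm a = PiTensorProduct.tprod k fun _ => a := by
  simp [single]

@[simp]
lemma toFront_tmul_tprod (n : ℕ) (a : A) (f : Fin n → A) :
    toFront k A n (a ⊗ₜ PiTensorProduct.tprod k f)
      = PiTensorProduct.tprod k (Fin.cons a f) := by
  simp only [toFront, LinearEquiv.trans_apply, congr_tmul, LinearEquiv.refl_apply,
    single_symm_apply, tmulEquiv_apply, reindex_tprod]
  congr 1
  funext i
  refine Fin.cases ?_ (fun j => ?_) i
  · exact congrArg (Sum.elim _ f) (finSumFinEquiv_symm_apply_castAdd (0 : Fin 1))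
  · have : Fin.cast (Nat.add_comm 1 n).symm j.succ = Fin.natAdd 1 j :=
      Fin.ext (Nat.add_comm _ _)
    simp [this]

@[simp]
lemma toFront_symm_tprod (n : ℕ) (f : Fin (n + 1) → A) :
    (toFront k A n).symm (PiTensorProduct.tprod k f)
      = f 0 ⊗ₜ PiTensorProduct.tprod k (Fin.tail f) := by
  rw [LinearEquiv.symm_apply_eq, toFront_tmul_tprod, Fin.cons_self_tail]

lemma mulFront_tprod (n : ℕ) (f : Fin (n + 2) → A) :
    mulFront k A n (PiTensorProduct.tprod k f)
      = PiTensorProduct.tprod k (Fin.cons (f 0 * f 1) (Fin.tail (Fin.tail f))) := by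
  simp [mulFront, Fin.tail]

lemma mulFront_tprod_two (a b d e : A) :
    mulFront k A 2 (PiTensorProduct.tprod k ![a, b, d, e])
      = PiTensorProduct.tprod k ![a * b, d, e] := by
  rw [mulFront_tprod]
  exact congrArg _ (funext fun i => by fin_cases i <;> rfl)

lemma mulFront_tprod_zero (a b : A) :
    mulFront k A 0 (PiTensorProduct.tprod k ![a, b]) = PiTensorProduct.tprod k ![a * b] := by
  rw [mulFront_tprod]
  exact congrArg _ (funext fun i => by fin_cases i; rfl)

lemma ins0_tprod (n : ℕ) (f : Fin n → A) :
    ins0 k A n (PiTensorProduct.tprod k f) = PiTensorProduct.tprod k (Fin.cons 1 f) := by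
  simp [ins0]

lemma nface_one_tprod (a b : A) :
    nface k A 1 0 (PiTensorProduct.tprod k ![a, b]) = PiTensorProduct.tprod k ![a * b] := by
  simp only [nface, LinearMap.coe_comp, Function.comp_apply, LinearEquiv.coe_coe, reindex_tprod,
    mulFront_tprod]
  exact congrArg _ (funext fun i => by fin_cases i; rfl)

lemma nface_three_tprod (j : Fin 3) (a b d e : A) :
    nface k A 3 j (PiTensorProduct.tprod k ![a, b, d, e])
      = ![PiTensorProduct.tprod k ![a * b, d, e], PiTensorProduct.tprod k ![a, b * d, e],
          PiTensorProduct.tprod k ![a, b, d * e]] j := by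
  fin_cases j <;>
  · simp only [nface, LinearMap.coe_comp, Function.comp_apply, LinearEquiv.coe_coe,
      reindex_tprod, mulFront_tprod]
    exact congrArg _ (funext fun i => by fin_cases i <;> rfl)

lemma rotR_tprod_two (a b : A) :
    rotR k A 2 (PiTensorProduct.tprod k ![a, b]) = PiTensorProduct.tprod k ![b, a] := by
  simp only [rotR, reindex_tprod]
  exact congrArg _ (funext fun i => by fin_cases i <;> rfl)

lemma rotR_tprod_four (a b d e : A) :
    rotR k A 4 (PiTensorProduct.tprod k ![a, b, d, e])
      = PiTensorProduct.tprod k ![e, a, b, d] := by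
  simp only [rotR, reindex_tprod]
  exact congrArg _ (funext fun i => by fin_cases i <;> rfl)

lemma ins1_tprod (a b : A) :
    ins1 k A 1 (PiTensorProduct.tprod k ![a, b]) = PiTensorProduct.tprod k ![a, 1, b] := by
  simp only [ins1, LinearMap.coe_comp, Function.comp_apply, LinearEquiv.coe_coe, rotR,
    reindex_symm, reindex_tprod, ins0_tprod]
  exact congrArg _ (funext fun i => by fin_cases i <;> rfl)

lemma hb_zero_tprod (a b : A) :
    hb k A 0 (PiTensorProduct.tprod k ![a, b])
      = PiTensorProduct.tprod k ![a * b] - PiTensorProduct.tprod k ![b * a] := by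
  simp only [hb, Nat.reduceAdd, LinearMap.add_apply, LinearMap.smul_apply,
    Fin.sum_univ_one, Fin.val_zero, pow_zero, nface_one_tprod, LinearMap.comp_apply,
    LinearEquiv.coe_coe, rotR_tprod_two, mulFront_tprod_zero]
  module

lemma hb_two_tprod (a b d e : A) :
    hb k A 2 (PiTensorProduct.tprod k ![a, b, d, e])
      = PiTensorProduct.tprod k ![a * b, d, e] - PiTensorProduct.tprod k ![a, b * d, e]
        + PiTensorProduct.tprod k ![a, b, d * e] - PiTensorProduct.tprod k ![e * a, b, d] := by
  simp only [hb, Nat.reduceAdd, LinearMap.add_apply, LinearMap.smul_apply,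
    Fin.sum_univ_three, nface_three_tprod, LinearMap.comp_apply, LinearEquiv.coe_coe,
    rotR_tprod_four, mulFront_tprod_two, Matrix.cons_val_zero, Matrix.cons_val_one,
    Matrix.cons_val_two, Matrix.tail_cons, Matrix.head_cons, Fin.val_zero, Fin.val_one, Fin.val_two]
  module

lemma reindex_finRotate_two_pow_inv_tprod (j : Fin 2) (a b : A) :
    reindex k (fun _ => A) ((finRotate 2 ^ (j : ℕ))⁻¹) (PiTensorProduct.tprod k ![a, b])
      = ![PiTensorProduct.tprod k ![a, b], PiTensorProduct.tprod k ![b, a]] j := by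
  fin_cases j <;>
  · simp only [reindex_tprod]
    exact congrArg _ (funext fun i => by fin_cases i <;> rfl)

lemma hB_one_tprod (a b : A) :
    hB k A 1 (PiTensorProduct.tprod k ![a, b])
      = PiTensorProduct.tprod k ![1, a, b] - PiTensorProduct.tprod k ![a, 1, b]
        - PiTensorProduct.tprod k ![1, b, a] + PiTensorProduct.tprod k ![b, 1, a] := by
  simp only [hB, Nat.reduceAdd, Fin.sum_univ_two, LinearMap.add_apply, LinearMap.smul_apply,
    LinearMap.comp_apply, LinearEquiv.coe_coe, LinearMap.sub_apply,
    reindex_finRotate_two_pow_inv_tprod]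
  simp only [Matrix.cons_val_zero, Matrix.cons_val_one, Matrix.cons_val_fin_one, ins0_tprod,
    Matrix.Fin.cons_vecCons, ins1_tprod, Fin.val_zero, Fin.val_one, mul_one, mul_zero, pow_zero,
    pow_one, one_smul, neg_smul]
  abel

lemma adjCochain_iC_tprod (α : A →ₗ[k] A →ₗ[k] Module.Dual k A) (c a b d : A) :
    adjCochain k A α (iC k A c 2 (PiTensorProduct.tprod k ![a, b, d])) = α b d (a * c) := by
  simp [adjCochain, triple, iC]

def IsHochschildTwoCocycle (α : A →ₗ[k] A →ₗ[k] Module.Dual k A) : Prop :=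
  ∀ a b d x : A, α b d (x * a) - α (a * b) d x + α a (b * d) x - α a b (d * x) = 0

variable {α : A →ₗ[k] A →ₗ[k] Module.Dual k A} {c : A}

lemma IsHochschildTwoCocycle.one_left (hα : IsHochschildTwoCocycle α) (b x : A) :
    α 1 b x = α 1 1 (b * x) := by
  simpa [sub_eq_zero] using hα 1 1 b x

lemma adjCochain_comp_iC_comp_hb_eq_zero (hα : IsHochschildTwoCocycle α)
    (hc : ∀ a : A, a * c = c * a) :
    (adjCochain k A α ∘ₗ iC k A c 2) ∘ₗ hb k A 2 = 0 := by
  refine PiTensorProduct.ext (MultilinearMap.ext fun f => ?_)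
  obtain ⟨a, b, d, e, rfl⟩ : ∃ a b d e, f = ![a, b, d, e] :=
    ⟨f 0, f 1, f 2, f 3, (FinVec.etaExpand_eq f).symm⟩
  have hcb : a * c * b = a * b * c := by rw [mul_assoc, ← hc b, mul_assoc]
  simpa [hb_two_tprod, adjCochain_iC_tprod, hcb, mul_assoc] using hα b d e (a * c)

lemma adjCochain_comp_iC_comp_hB_add_eq_zero (hα : IsHochschildTwoCocycle α)
    (hc : ∀ a : A, a * c = c * a) {h : Module.Dual k A}
    (H : ∀ a b : A, α a b c - α b a c + h (a * b - b * a) = 0) :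
    (adjCochain k A α ∘ₗ iC k A c 2) ∘ₗ hB k A 1
      + (((h - (α 1 1) ∘ₗ LinearMap.mulLeft k c) ∘ₗ (single k A).toLinearMap)
          ∘ₗ hb k A 0) = 0 := by
  refine PiTensorProduct.ext (MultilinearMap.ext fun f => ?_)
  obtain ⟨a, b, rfl⟩ : ∃ a b, f = ![a, b] := ⟨f 0, f 1, (FinVec.etaExpand_eq f).symm⟩
  have hab : c * (a * b) = a * (b * c) := by rw [← hc, mul_assoc]
  have hba : c * (b * a) = b * (a * c) := by rw [← hc, mul_assoc]
  have hH := H a b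
  rw [map_sub] at hH
  simp only [Nat.reduceAdd, LinearMap.add_compMultilinearMap, add_apply,
    LinearMap.compMultilinearMap_apply, LinearMap.coe_comp, Function.comp_apply, hB_one_tprod,
    map_add, map_sub, adjCochain_iC_tprod, one_mul, hα.one_left b, hα.one_left a,
    LinearEquiv.coe_coe, hb_zero_tprod, single_tprod, Matrix.cons_val_fin_one, LinearMap.sub_apply,
    LinearMap.mulLeft_apply, hab, hba, LinearMap.zero_compMultilinearMap, zero_apply]
  linear_combination hH

theorem cyclic_two_cocycle_lift_general
    (k : Type*) [Field k] (A : Type*) [Ring A] [Algebra k A]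
    (α : A →ₗ[k] A →ₗ[k] Module.Dual k A)
    (hα : ∀ a b d x : A, α b d (x * a) - α (a * b) d x + α a (b * d) x - α a b (d * x) = 0)
    (c : A) (hc : ∀ a : A, a * c = c * a)
    (h : Module.Dual k A)
    (H : ∀ a b : A, α a b c - α b a c + h (a * b - b * a) = 0) :
    (adjCochain k A α ∘ₗ iC k A c 2) ∘ₗ hb k A 2 = 0 ∧
    (adjCochain k A α ∘ₗ iC k A c 2) ∘ₗ hB k A 1
      + (((h - (α 1 1) ∘ₗ LinearMap.mulLeft k c) ∘ₗ (single k A).toLinearMap)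
          ∘ₗ hb k A 0) = 0 :=
  ⟨adjCochain_comp_iC_comp_hb_eq_zero hα hc, adjCochain_comp_iC_comp_hB_add_eq_zero hα hc H⟩

/-- Suppose `c ∈ Z(A) ∩ U(A)` and `h ∈ A*` satisfy
`α(a⊗b)(c) − α(b⊗a)(c) + h(ab − ba) = 0` for all `a, b`. Then, with
`h' := h − α(1⊗1)·c`, the pair `(i_c*(α̃), h')` is a cyclic 2-cocycle:
`b₃*(i_c*(α̃)) = 0` and `B₁*(i_c*(α̃)) + b₁*(h') = 0`. -/
theorem cyclic_two_cocycle_lift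
    (k : Type*) [Field k] (A : Type*) [Ring A] [Algebra k A] [FiniteDimensional k A]
    (α : A →ₗ[k] A →ₗ[k] Module.Dual k A)
    (hα : ∀ a b d x : A, α b d (x * a) - α (a * b) d x + α a (b * d) x - α a b (d * x) = 0)
    (c : A) (hc : ∀ a : A, a * c = c * a) (hcu : IsUnit c)
    (h : Module.Dual k A)
    (H : ∀ a b : A, α a b c - α b a c + h (a * b - b * a) = 0) :
    (adjCochain k A α ∘ₗ iC k A c 2) ∘ₗ hb k A 2 = 0 ∧
    (adjCochain k A α ∘ₗ iC k A c 2) ∘ₗ hB k A 1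
      + (((h - (α 1 1) ∘ₗ LinearMap.mulLeft k c) ∘ₗ (single k A).toLinearMap)
          ∘ₗ hb k A 0) = 0 :=
  cyclic_two_cocycle_lift_general k A α hα c hc h H

end HochschildScaffold
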